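/- arXiv:math/0504308 — 2 statements merged into one kernel-verified Lean document; each statement's English description precedes it below -/
import Mathlib

section
/- Let A be an n×n real matrix such that A + Aᵀ is negative definite, let λ > 0 be the smallest eigenvalue of −(A + Aᵀ), and let p_1,…,p_{n−1} ≥ 0. Then every feasible matrix M of the associated semidefinite program satisfying ⟨A_n, M⟩ ≥ 0 obeys tr(M) ≤ (p_1 + ⋯ + p_{n−1})/λ. Consequently, for any E ≥ 0 the set of feasible M with ⟨A_n, M⟩ = E is bounded. -/
open Matrix

/-- Trace inner product on square matrices: ⟨X, Y⟩ = tr(XY). -/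
noncomputable def ip {m : ℕ} (X Y : Matrix (Fin m) (Fin m) ℝ) : ℝ := (X * Y).trace

/-- For an m×m matrix `A`, the symmetric matrix `A_i = e_i a_iᵀ + a_i e_iᵀ`,
whose i-th row and column equal the i-th row of `A` (with (i,i) entry `2 A i i`),
all other entries zero. -/
noncomputable def sdpMat {m : ℕ} (A : Matrix (Fin m) (Fin m) ℝ) (i : Fin m) :
    Matrix (Fin m) (Fin m) ℝ :=
  Matrix.of fun k l => (if k = i then A i l else 0) + (if l = i then A i k else 0)

/-- Feasibility for the semidefinite program associated to an (n+1)×(n+1) matrix `A`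
and data `p`: `M ⪰ 0` and `⟨A_i, M⟩ = -p_i` for every non-final index `i`. -/
def Feasible {n : ℕ} (A : Matrix (Fin (n + 1)) (Fin (n + 1)) ℝ)
    (p : Fin (n + 1) → ℝ) (M : Matrix (Fin (n + 1)) (Fin (n + 1)) ℝ) : Prop :=
  M.PosSemidef ∧ ∀ i : Fin (n + 1), i ≠ Fin.last n → ip (sdpMat A i) M = -(p i)

/-!
The constraints say `⟨A_i, M⟩ = -pᵢ` for `i < n`, and `∑ᵢ A_i = A + Aᵀ`, so a feasible `M` with
nonnegative objective has `⟨-(A + Aᵀ), M⟩ ≤ ∑ pᵢ`. Since `-(A + Aᵀ) - λ I ⪰ 0` and the trace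
pairing of two positive semidefinite matrices is nonnegative, `λ tr M ≤ ⟨-(A + Aᵀ), M⟩`.
Boundedness follows from `⟨M, M⟩ ≤ (tr M)²` for `M ⪰ 0`, itself an instance of
`tr (XY) ≤ tr X · tr Y`, which comes from `X ≤ (tr X) I`.
-/

open scoped MatrixOrder ComplexOrder

namespace Matrix

variable {n 𝕜 : Type*} [Fintype n] [DecidableEq n] [RCLike 𝕜] {A X Y : Matrix n n 𝕜}

theorem IsHermitian.posSemidef_sub_smul_one_of_le_eigenvalues (hA : A.IsHermitian) {c : ℝ}
    (h : ∀ i, c ≤ hA.eigenvalues i) : (A - c • (1 : Matrix n n 𝕜)).PosSemidef := by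
  rw [← le_iff, ← Algebra.algebraMap_eq_smul_one,
    algebraMap_le_iff_le_spectrum (R := ℝ) hA.isSelfAdjoint, hA.spectrum_real_eq_range_eigenvalues]
  rintro _ ⟨i, rfl⟩
  exact h i

theorem IsHermitian.posSemidef_smul_one_sub_of_eigenvalues_le (hA : A.IsHermitian) {c : ℝ}
    (h : ∀ i, hA.eigenvalues i ≤ c) : (c • (1 : Matrix n n 𝕜) - A).PosSemidef := by
  rw [← le_iff, ← Algebra.algebraMap_eq_smul_one,
    le_algebraMap_iff_spectrum_le (R := ℝ) hA.isSelfAdjoint, hA.spectrum_real_eq_range_eigenvalues]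
  rintro _ ⟨i, rfl⟩
  exact h i

theorem PosSemidef.trace_mul_nonneg (hX : X.PosSemidef) (hY : Y.PosSemidef) :
    0 ≤ (X * Y).trace := by
  obtain ⟨B, rfl⟩ := CStarAlgebra.nonneg_iff_eq_star_mul_self.mp hX.nonneg
  rw [star_eq_conjTranspose, Matrix.mul_assoc, trace_mul_comm]
  exact (hY.mul_mul_conjTranspose_same B).trace_nonneg

theorem PosSemidef.trace_mul_le_trace_mul_trace (hX : X.PosSemidef) (hY : Y.PosSemidef) :
    (X * Y).trace ≤ X.trace * Y.trace := by
  have htr : X.trace = ((∑ i, hX.1.eigenvalues i : ℝ) : 𝕜) := by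
    rw [hX.1.trace_eq_sum_eigenvalues, RCLike.ofReal_sum]
  have hle : ∀ i, hX.1.eigenvalues i ≤ ∑ j, hX.1.eigenvalues j := fun i =>
    Finset.single_le_sum (fun j _ => hX.eigenvalues_nonneg j) (Finset.mem_univ i)
  have hpair := (hX.1.posSemidef_smul_one_sub_of_eigenvalues_le hle).trace_mul_nonneg hY
  rwa [Matrix.sub_mul, trace_sub, smul_mul, Matrix.one_mul, trace_smul,
    RCLike.real_smul_eq_coe_mul, ← htr, sub_nonneg] at hpair

end Matrix

theorem sum_sdpMat {m : ℕ} (A : Matrix (Fin m) (Fin m) ℝ) : ∑ i, sdpMat A i = A + Aᵀ := by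
  ext k l
  simp [sdpMat, Matrix.sum_apply, Finset.sum_add_distrib]

namespace Feasible

variable {n : ℕ} {A M : Matrix (Fin (n + 1)) (Fin (n + 1)) ℝ} {p : Fin (n + 1) → ℝ}

theorem ip_add_transpose (hM : Feasible A p M) :
    ip (A + Aᵀ) M =
      ip (sdpMat A (Fin.last n)) M - ∑ i ∈ Finset.univ.erase (Fin.last n), p i := by
  rw [← sum_sdpMat, ip, Finset.sum_mul, trace_sum,
    ← Finset.add_sum_erase _ _ (Finset.mem_univ (Fin.last n)), sub_eq_add_neg,
    ← Finset.sum_neg_distrib]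
  congr 1
  exact Finset.sum_congr rfl fun i hi => hM.2 i (Finset.ne_of_mem_erase hi)

theorem trace_le (hM : Feasible A p M) (hHerm : (-(A + Aᵀ)).IsHermitian) {lam : ℝ}
    (hlam_pos : 0 < lam) (hlam : ∀ i, lam ≤ hHerm.eigenvalues i)
    (hobj : 0 ≤ ip (sdpMat A (Fin.last n)) M) :
    M.trace ≤ (∑ i ∈ Finset.univ.erase (Fin.last n), p i) / lam := by
  have hpair := (hHerm.posSemidef_sub_smul_one_of_le_eigenvalues hlam).trace_mul_nonneg hM.1
  rw [Matrix.sub_mul, trace_sub, Matrix.neg_mul, trace_neg, smul_mul, Matrix.one_mul, trace_smul,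
    smul_eq_mul] at hpair
  have hsum := hM.ip_add_transpose
  rw [ip] at hsum
  rw [le_div_iff₀ hlam_pos]
  linarith

end Feasible

theorem sdp_feasible_set_bounded_general (n : ℕ)
    (A : Matrix (Fin (n + 1)) (Fin (n + 1)) ℝ)
    (hHerm : (-(A + Aᵀ)).IsHermitian)
    (lam : ℝ) (hlam_pos : 0 < lam)
    (hlam : IsLeast (Set.range hHerm.eigenvalues) lam)
    (p : Fin (n + 1) → ℝ) :
    (∀ M, Feasible A p M → 0 ≤ ip (sdpMat A (Fin.last n)) M →
      M.trace ≤ (∑ i ∈ Finset.univ.erase (Fin.last n), p i) / lam) ∧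
    ∀ E : ℝ, 0 ≤ E → ∃ C : ℝ,
      ∀ M, Feasible A p M → ip (sdpMat A (Fin.last n)) M = E → ip M M ≤ C := by
  have hlam_le : ∀ i, lam ≤ hHerm.eigenvalues i := fun i => hlam.2 ⟨i, rfl⟩
  refine ⟨fun M hM hobj => hM.trace_le hHerm hlam_pos hlam_le hobj, fun E hE => ?_⟩
  refine ⟨((∑ i ∈ Finset.univ.erase (Fin.last n), p i) / lam) ^ 2, fun M hM hobj => ?_⟩
  calc ip M M ≤ M.trace ^ 2 := by
        rw [ip, sq]
        exact hM.1.trace_mul_le_trace_mul_trace hM.1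
    _ ≤ _ := pow_le_pow_left₀ hM.1.trace_nonneg
        (hM.trace_le hHerm hlam_pos hlam_le (hobj ▸ hE)) 2

/-- If `lam > 0` is the smallest eigenvalue of `-(A + Aᵀ)`, then every feasible `M` with
nonnegative objective value satisfies `tr M ≤ (p₁ + ⋯ + p_{n-1}) / lam`; consequently,
for each `E ≥ 0` the set of feasible matrices with objective value `E` is bounded
(with respect to the trace inner product norm). -/
theorem sdp_feasible_set_bounded (n : ℕ)
    (A : Matrix (Fin (n + 1)) (Fin (n + 1)) ℝ)
    (hA : (-(A + Aᵀ)).PosDef)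
    (hHerm : (-(A + Aᵀ)).IsHermitian)
    (lam : ℝ) (hlam_pos : 0 < lam)
    (hlam : IsLeast (Set.range hHerm.eigenvalues) lam)
    (p : Fin (n + 1) → ℝ) (hp : ∀ i : Fin (n + 1), i ≠ Fin.last n → 0 ≤ p i) :
    (∀ M, Feasible A p M → 0 ≤ ip (sdpMat A (Fin.last n)) M →
      M.trace ≤ (∑ i ∈ Finset.univ.erase (Fin.last n), p i) / lam) ∧
    ∀ E : ℝ, 0 ≤ E → ∃ C : ℝ,
      ∀ M, Feasible A p M → ip (sdpMat A (Fin.last n)) M = E → ip M M ≤ C :=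
  sdp_feasible_set_bounded_general n A hHerm lam hlam_pos hlam p
end

section
/- Let A be a 3×3 real matrix such that A + Aᵀ is negative definite, and let p_1, p_2 ≥ 0. Then the associated semidefinite program (maximize ⟨A_3, M⟩ over M ⪰ 0 with ⟨A_1, M⟩ = −p_1 and ⟨A_2, M⟩ = −p_2) has an optimal solution M₀ with rank(M₀) ≤ 1. -/
/-!
Since `⟨A₁, M⟩ + ⟨A₂, M⟩ + ⟨A₃, M⟩ = tr((A + Aᵀ) M)` and `-(A + Aᵀ) ⪰ ε I` for some `ε > 0`,
a feasible `M` has objective value at most `p₁ + p₂ - ε tr M`. The entries of `M ⪰ 0` are bounded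
by `tr M`, so the superlevel sets of the objective on the feasible set are compact and an optimum
exists.

If an optimal `M` has rank at least two, let `W = [u v]` collect orthonormal eigenvectors of `M`
with eigenvalues `λ, μ > 0`. Symmetric `2 × 2` matrices form a space of dimension three, so some
`Y ≠ 0` makes `W Y Wᵀ` invisible to the two constraints, and `M + t W Y Wᵀ ⪰ 0` whenever
`diag(λ, μ) + t Y ⪰ 0`. This holds for all small `|t|`, so optimality forces
`⟨A₃, W Y Wᵀ⟩ = 0`; moving `t` to where `diag(λ, μ) + t Y` becomes singular gives an optimal
matrix of smaller rank. Iterating reaches rank at most one.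
-/

open Matrix Filter Topology

section TraceInnerProduct

variable {m : ℕ}

lemma ip_add_right (X Y Z : Matrix (Fin m) (Fin m) ℝ) : ip X (Y + Z) = ip X Y + ip X Z := by
  simp [ip, Matrix.mul_add]

lemma ip_smul_right (X Y : Matrix (Fin m) (Fin m) ℝ) (t : ℝ) : ip X (t • Y) = t * ip X Y := by
  simp [ip]

lemma continuous_ip (X : Matrix (Fin m) (Fin m) ℝ) : Continuous (ip X) := by
  unfold ip; fun_prop

lemma ip_sdpMat (A M : Matrix (Fin m) (Fin m) ℝ) (i : Fin m) :
    ip (sdpMat A i) M = ∑ l, A i l * (M l i + M i l) := by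
  simp only [ip, sdpMat, Matrix.trace, Matrix.diag, Matrix.mul_apply, Matrix.of_apply]
  rw [Finset.sum_comm]
  simp [add_mul, Finset.sum_add_distrib, ite_mul, mul_add]

lemma sum_ip_sdpMat (A M : Matrix (Fin m) (Fin m) ℝ) :
    ∑ i, ip (sdpMat A i) M = ((A + Aᵀ) * M).trace := by
  simp only [ip_sdpMat, Matrix.trace, Matrix.diag, Matrix.mul_apply, Matrix.add_apply,
    Matrix.transpose_apply, add_mul, mul_add, Finset.sum_add_distrib]
  rw [Finset.sum_comm (f := fun i l => A i l * M i l)]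

lemma ip_sdpMat_diagonal (A : Matrix (Fin m) (Fin m) ℝ) (d : Fin m → ℝ) (k : Fin m) :
    ip (sdpMat A k) (diagonal d) = 2 * A k k * d k := by
  rw [ip_sdpMat, Finset.sum_eq_single k (fun l _ hl => by simp [diagonal_apply_ne _ hl,
    diagonal_apply_ne' _ hl]) (by simp)]
  rw [diagonal_apply_eq]; ring

end TraceInnerProduct

namespace Matrix

variable {n : Type*} [Fintype n]

open scoped MatrixOrder in
lemma PosSemidef.trace_mul_nonneg_s8 {S M : Matrix n n ℝ} (hS : S.PosSemidef) (hM : M.PosSemidef) :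
    0 ≤ (S * M).trace := by
  classical
  obtain ⟨B, rfl⟩ := CStarAlgebra.nonneg_iff_eq_star_mul_self.mp hM.nonneg
  rw [← Matrix.mul_assoc, trace_mul_cycle, star_eq_conjTranspose]
  exact (hS.mul_mul_conjTranspose_same B).trace_nonneg

open scoped MatrixOrder in
lemma PosDef.exists_pos_mul_trace_le [DecidableEq n] [Nonempty n] {S : Matrix n n ℝ}
    (hS : S.PosDef) : ∃ ε > 0, ∀ M : Matrix n n ℝ, M.PosSemidef → ε * M.trace ≤ (S * M).trace := by
  obtain ⟨ε, hε, hle⟩ := (CFC.exists_pos_algebraMap_le_iff hS.isStrictlyPositive.isSelfAdjoint).2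
    fun x hx => hS.isStrictlyPositive.spectrum_pos hx
  refine ⟨ε, hε, fun M hM => ?_⟩
  have := (le_iff.mp hle).trace_mul_nonneg_s8 hM
  rwa [Algebra.algebraMap_eq_smul_one, Matrix.sub_mul, trace_sub, Matrix.smul_mul, Matrix.one_mul,
    trace_smul, smul_eq_mul, sub_nonneg] at this

lemma PosSemidef.abs_apply_le [DecidableEq n] {M : Matrix n n ℝ} (hM : M.PosSemidef) (i j : n) :
    |M i j| ≤ (M i i + M j j) / 2 := by
  have hji : M j i = M i j := by simpa using congrFun (congrFun hM.1 i) j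
  have hplus := hM.dotProduct_mulVec_nonneg (Pi.single i 1 + Pi.single j 1)
  have hminus := hM.dotProduct_mulVec_nonneg (Pi.single i 1 - Pi.single j 1)
  simp only [star_trivial, mulVec_add, mulVec_sub, mulVec_single, MulOpposite.op_one, one_smul,
    dotProduct_add, add_dotProduct, dotProduct_sub, sub_dotProduct, single_dotProduct, col_apply,
    one_mul, hji] at hplus hminus
  rw [abs_le]; constructor <;> linarith

lemma PosSemidef.abs_apply_le_trace {M : Matrix n n ℝ} (hM : M.PosSemidef) (i j : n) :
    |M i j| ≤ M.trace := by
  classical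
  have hdiag (k : n) : M k k ≤ M.trace :=
    Finset.single_le_sum (f := fun k => M k k) (fun l _ => hM.diag_nonneg) (Finset.mem_univ k)
  linarith [hM.abs_apply_le i j, hdiag i, hdiag j]

lemma isClosed_setOf_posSemidef : IsClosed {M : Matrix n n ℝ | M.PosSemidef} := by
  simp only [posSemidef_iff_dotProduct_mulVec, Set.ofPred_and, Set.ofPred_forall]
  exact (isClosed_eq (by fun_prop) continuous_id).inter
    (isClosed_iInter fun x => isClosed_le continuous_const (by fun_prop))

omit [Fintype n] in
lemma isCompact_setOf_abs_apply_le (R : ℝ) :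
    IsCompact {M : Matrix n n ℝ | ∀ i j, |M i j| ≤ R} := by
  have h : {M : Matrix n n ℝ | ∀ i j, |M i j| ≤ R} =
      Set.univ.pi fun _ => Set.univ.pi fun _ => Set.Icc (-R) R := by
    ext M
    exact ⟨fun h i _ j _ => abs_le.mp (h i j), fun h i j => abs_le.mpr (h i trivial j trivial)⟩
  rw [h]
  exact isCompact_univ_pi fun _ => isCompact_univ_pi fun _ => isCompact_Icc

lemma rank_lt_of_mulVec_eq_zero {M N : Matrix n n ℝ} (hker : ∀ z, M *ᵥ z = 0 → N *ᵥ z = 0)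
    {w : n → ℝ} (hNw : N *ᵥ w = 0) (hMw : M *ᵥ w ≠ 0) : N.rank < M.rank := by
  have hlt : LinearMap.ker M.mulVecLin < LinearMap.ker N.mulVecLin :=
    lt_of_le_of_ne (fun z hz => hker z hz) fun h => hMw (h ▸ hNw : w ∈ LinearMap.ker M.mulVecLin)
  have hM := LinearMap.finrank_range_add_finrank_ker M.mulVecLin
  have hN := LinearMap.finrank_range_add_finrank_ker N.mulVecLin
  have := Submodule.finrank_lt_finrank_of_lt hlt
  unfold Matrix.rank
  omega

lemma PosSemidef.exists_eigenvectors_of_one_lt_rank [DecidableEq n] {M : Matrix n n ℝ}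
    (hM : M.PosSemidef) (hrank : 1 < M.rank) :
    ∃ (W : Matrix n (Fin 2) ℝ) (Λ : Fin 2 → ℝ),
      (∀ l, 0 < Λ l) ∧ Wᵀ * W = 1 ∧ M * W = W * diagonal Λ := by
  have hH := hM.1
  rw [hH.rank_eq_card_non_zero_eigs, Fintype.one_lt_card_iff] at hrank
  obtain ⟨⟨i, hi⟩, ⟨j, hj⟩, hij⟩ := hrank
  let e : Fin 2 → n := ![i, j]
  have he : Function.Injective e := by
    intro a b hab
    fin_cases a <;> fin_cases b <;> simp_all [e, eq_comm]
  let U : Matrix n n ℝ := hH.eigenvectorUnitary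
  refine ⟨U.submatrix id e, fun l => hH.eigenvalues (e l),
    fun l => (hM.eigenvalues_nonneg _).lt_of_ne' (by fin_cases l <;> assumption), ?_, ?_⟩
  · have hU : Uᵀ * U = 1 := by
      simpa [U, star_eq_conjTranspose] using Unitary.coe_star_mul_self hH.eigenvectorUnitary
    rw [transpose_submatrix, ← submatrix_mul _ _ _ _ _ Function.bijective_id, hU,
      submatrix_one _ he]
  · ext a l
    rw [mul_diagonal]
    simpa [U, mul_comm, mul_apply, mulVec, dotProduct] using
      congrFun (hH.mulVec_eigenvectorBasis (e l)) a

section Compression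

variable {k : Type*} [Fintype k] [DecidableEq k] {M : Matrix n n ℝ} {W : Matrix n k ℝ}
  {Λ : k → ℝ}

lemma transpose_mul_eq_of_mul_eq (hM : M.IsHermitian) (hMW : M * W = W * diagonal Λ) :
    Wᵀ * M = diagonal Λ * Wᵀ := by
  have h := congrArg transpose hMW
  rwa [transpose_mul, transpose_mul, diagonal_transpose,
    ← conjTranspose_eq_transpose_of_trivial M, hM.eq] at h

lemma eq_compl_conj_add [DecidableEq n] (hM : M.IsHermitian) (hW : Wᵀ * W = 1)
    (hMW : M * W = W * diagonal Λ) :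
    M = (1 - W * Wᵀ)ᵀ * M * (1 - W * Wᵀ) + W * diagonal Λ * Wᵀ := by
  have hWM := transpose_mul_eq_of_mul_eq hM hMW
  have hP : (1 - W * Wᵀ)ᵀ = 1 - W * Wᵀ := by simp [transpose_sub, transpose_mul]
  have hMW' (X : Matrix k n ℝ) : M * (W * X) = W * (diagonal Λ * X) := by
    rw [← Matrix.mul_assoc, hMW, Matrix.mul_assoc]
  have hW' (X : Matrix k n ℝ) : Wᵀ * (W * X) = X := by
    rw [← Matrix.mul_assoc, hW, Matrix.one_mul]
  rw [hP]
  simp only [Matrix.sub_mul, Matrix.mul_sub, Matrix.one_mul, Matrix.mul_one, Matrix.mul_assoc,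
    hMW', hWM, hW']
  abel

lemma posSemidef_add_conj (hM : M.PosSemidef) (hW : Wᵀ * W = 1)
    (hMW : M * W = W * diagonal Λ) {Y : Matrix k k ℝ} (hY : (diagonal Λ + Y).PosSemidef) :
    (M + W * Y * Wᵀ).PosSemidef := by
  classical
  rw [eq_compl_conj_add hM.1 hW hMW, add_assoc, ← Matrix.add_mul, ← Matrix.mul_add]
  exact (hM.conjTranspose_mul_mul_same _).add (hY.mul_mul_conjTranspose_same W)

lemma add_conj_mul_eq (hW : Wᵀ * W = 1) (hMW : M * W = W * diagonal Λ) (Y : Matrix k k ℝ) :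
    (M + W * Y * Wᵀ) * W = W * (diagonal Λ + Y) := by
  rw [Matrix.add_mul, hMW, Matrix.mul_assoc, hW, Matrix.mul_one, Matrix.mul_add]

lemma eq_zero_of_diagonal_mulVec_eq_zero (hΛ : ∀ l, Λ l ≠ 0) {v : k → ℝ}
    (hv : diagonal Λ *ᵥ v = 0) : v = 0 := by
  funext l
  have := congrFun hv l
  rw [mulVec_diagonal, Pi.zero_apply] at this
  exact (mul_eq_zero.mp this).resolve_left (hΛ l)

lemma transpose_mulVec_eq_zero (hM : M.IsHermitian) (hMW : M * W = W * diagonal Λ)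
    (hΛ : ∀ l, Λ l ≠ 0) {z : n → ℝ} (hz : M *ᵥ z = 0) : Wᵀ *ᵥ z = 0 := by
  refine eq_zero_of_diagonal_mulVec_eq_zero hΛ ?_
  rw [mulVec_mulVec, ← transpose_mul_eq_of_mul_eq hM hMW, ← mulVec_mulVec, hz, mulVec_zero]

lemma rank_add_conj_lt (hM : M.IsHermitian) (hW : Wᵀ * W = 1) (hMW : M * W = W * diagonal Λ)
    (hΛ : ∀ l, Λ l ≠ 0) {Y : Matrix k k ℝ} (hY : (diagonal Λ + Y).det = 0) :
    (M + W * Y * Wᵀ).rank < M.rank := by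
  obtain ⟨v, hv, hYv⟩ := exists_mulVec_eq_zero_iff.mpr hY
  refine rank_lt_of_mulVec_eq_zero (fun z hz => ?_) (w := W *ᵥ v) ?_ fun hMv => hv ?_
  · rw [add_mulVec, hz, ← mulVec_mulVec, transpose_mulVec_eq_zero hM hMW hΛ hz]
    simp
  · rw [mulVec_mulVec, add_conj_mul_eq hW hMW, ← mulVec_mulVec, hYv, mulVec_zero]
  · refine eq_zero_of_diagonal_mulVec_eq_zero hΛ ?_
    rw [← one_mulVec v, ← hW, ← mulVec_mulVec, mulVec_mulVec,
      ← transpose_mul_eq_of_mul_eq hM hMW, ← mulVec_mulVec, hMv, mulVec_zero]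

end Compression

end Matrix

lemma posSemidef_fin_two {p q r : ℝ} (hp : 0 ≤ p) (hq : 0 ≤ q) (hr : r ^ 2 ≤ p * q) :
    !![p, r; r, q].PosSemidef := by
  refine PosSemidef.of_dotProduct_mulVec_nonneg ?_ fun x => ?_
  · ext i j; fin_cases i <;> fin_cases j <;> rfl
  · have h : star x ⬝ᵥ !![p, r; r, q] *ᵥ x = p * x 0 ^ 2 + 2 * r * x 0 * x 1 + q * x 1 ^ 2 := by
      simp only [dotProduct, Pi.star_apply, star_trivial, mulVec, of_apply, cons_val',
        cons_val_fin_one, Fin.sum_univ_two, cons_val_zero, cons_val_one]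
      ring
    rw [h]
    rcases hp.eq_or_lt with rfl | hp
    · obtain rfl : r = 0 := by nlinarith
      nlinarith [mul_nonneg hq (sq_nonneg (x 1))]
    · nlinarith [sq_nonneg (p * x 0 + r * x 1), mul_nonneg hq (sq_nonneg (x 1))]

lemma diagonal_add_smul_fin_two (Λ : Fin 2 → ℝ) (a b c t : ℝ) :
    diagonal Λ + t • !![a, c; c, b] = !![Λ 0 + t * a, t * c; t * c, Λ 1 + t * b] := by
  ext i j; fin_cases i <;> fin_cases j <;> simp

lemma eventually_posSemidef_diagonal_add_smul {Λ : Fin 2 → ℝ} (hΛ : ∀ l, 0 < Λ l) (a b c : ℝ) :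
    ∀ᶠ t : ℝ in 𝓝 0, (diagonal Λ + t • !![a, c; c, b]).PosSemidef := by
  have hpos {f : ℝ → ℝ} (hf : Continuous f) (h0 : 0 < f 0) : ∀ᶠ t in 𝓝 0, 0 < f t :=
    (hf.tendsto 0).eventually (lt_mem_nhds h0)
  have h₁ : ∀ᶠ t in 𝓝 0, 0 < Λ 0 + t * a := hpos (by fun_prop) (by simpa using hΛ 0)
  have h₂ : ∀ᶠ t in 𝓝 0, 0 < Λ 1 + t * b := hpos (by fun_prop) (by simpa using hΛ 1)
  have h₃ : ∀ᶠ t in 𝓝 0, 0 < (Λ 0 + t * a) * (Λ 1 + t * b) - (t * c) ^ 2 :=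
    hpos (by fun_prop) (by simpa using mul_pos (hΛ 0) (hΛ 1))
  filter_upwards [h₁, h₂, h₃] with t h₁ h₂ h₃
  rw [diagonal_add_smul_fin_two]
  exact posSemidef_fin_two h₁.le h₂.le (by linarith)

lemma exists_det_nonpos {d₁ d₂ a b c : ℝ} (h₁ : 0 < d₁) (h₂ : 0 < d₂) (habc : (a, b, c) ≠ 0) :
    ∃ t, (d₁ + t * a) * (d₂ + t * b) ≤ (t * c) ^ 2 := by
  by_cases ha : a = 0
  · by_cases hb : b = 0
    · have hc : c ≠ 0 := by rintro rfl; simp_all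
      refine ⟨(d₁ + d₂) / c, ?_⟩
      rw [ha, hb, div_mul_cancel₀ _ hc]
      nlinarith
    · exact ⟨-d₂ / b, by rw [div_mul_cancel₀ _ hb]; nlinarith [sq_nonneg (-d₂ / b * c)]⟩
  · exact ⟨-d₁ / a, by rw [div_mul_cancel₀ _ ha]; nlinarith [sq_nonneg (-d₁ / a * c)]⟩

lemma exists_det_eq_zero {d₁ d₂ a b c : ℝ} (h₁ : 0 < d₁) (h₂ : 0 < d₂) (habc : (a, b, c) ≠ 0) :
    ∃ s, 0 ≤ d₁ + s * a ∧ 0 ≤ d₂ + s * b ∧ (d₁ + s * a) * (d₂ + s * b) = (s * c) ^ 2 := by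
  obtain ⟨t, ht⟩ := exists_det_nonpos h₁ h₂ habc
  -- at a zero of `ψ` all three quantities are nonnegative, and a vanishing diagonal entry
  -- forces the determinant to vanish as well
  let ψ : ℝ → ℝ := fun s =>
    min ((d₁ + s * a) * (d₂ + s * b) - (s * c) ^ 2) (min (d₁ + s * a) (d₂ + s * b))
  have hψ0 : 0 < ψ 0 := lt_min (by norm_num; positivity) (lt_min (by simpa) (by simpa))
  have hψt : ψ t ≤ 0 := (min_le_left _ _).trans (by linarith)
  obtain ⟨s, -, hs⟩ := intermediate_value_uIcc (by fun_prop : Continuous ψ).continuousOn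
    (Set.mem_uIcc.mpr (Or.inr ⟨hψt, hψ0.le⟩))
  have hge := hs.ge
  simp only [ψ, le_min_iff, sub_nonneg] at hge
  obtain ⟨hdet, hs₁, hs₂⟩ := hge
  refine ⟨s, hs₁, hs₂, le_antisymm (not_lt.mp fun hlt => ?_) hdet⟩
  have hpos : 0 < ψ s :=
    lt_min (sub_pos.mpr hlt) (lt_min (by nlinarith [sq_nonneg (s * c)])
      (by nlinarith [sq_nonneg (s * c)]))
  exact hpos.ne' hs

def sdpFeasible {m : ℕ} {ι : Type*} (X : ι → Matrix (Fin m) (Fin m) ℝ) (r : ι → ℝ) :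
    Set (Matrix (Fin m) (Fin m) ℝ) :=
  {M | M.PosSemidef ∧ ∀ i, ip (X i) M = r i}

section RankReduction

variable {m : ℕ} {ι : Type*} {X : ι → Matrix (Fin m) (Fin m) ℝ} {r : ι → ℝ}
  {C : Matrix (Fin m) (Fin m) ℝ}

lemma exists_ne_zero_forall_ip_conj_eq_zero [Fintype ι] (hι : Fintype.card ι < 3)
    (X : ι → Matrix (Fin m) (Fin m) ℝ) (W : Matrix (Fin m) (Fin 2) ℝ) :
    ∃ a b c : ℝ, (a, b, c) ≠ 0 ∧ ∀ i, ip (X i) (W * !![a, c; c, b] * Wᵀ) = 0 := by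
  let L : (Fin 3 → ℝ) →ₗ[ℝ] ι → ℝ :=
    { toFun y i := ip (X i) (W * !![y 0, y 2; y 2, y 1] * Wᵀ)
      map_add' y z := by
        funext i
        simp only [Pi.add_apply]
        rw [← ip_add_right, ← Matrix.add_mul, ← Matrix.mul_add]
        congr 3
        ext j k; fin_cases j <;> fin_cases k <;> simp
      map_smul' t y := by
        funext i
        simp only [RingHom.id_apply, Pi.smul_apply, smul_eq_mul]
        rw [← ip_smul_right, ← Matrix.smul_mul, ← Matrix.mul_smul]
        congr 3
        ext j k; fin_cases j <;> fin_cases k <;> simp }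
  obtain ⟨y, hy, hy0⟩ :=
    Submodule.exists_mem_ne_zero_of_ne_bot (L.ker_ne_bot_of_finrank_lt (by simpa using hι))
  refine ⟨y 0, y 1, y 2, fun h => hy0 ?_, fun i => congrFun hy i⟩
  simp only [Prod.mk_eq_zero] at h
  ext k; fin_cases k <;> simp [h]

lemma add_smul_mem_sdpFeasible {M D : Matrix (Fin m) (Fin m) ℝ} (hM : M ∈ sdpFeasible X r)
    (hD : ∀ i, ip (X i) D = 0) {t : ℝ} (ht : (M + t • D).PosSemidef) :
    M + t • D ∈ sdpFeasible X r :=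
  ⟨ht, fun i => by rw [ip_add_right, ip_smul_right, hD i, mul_zero, add_zero, hM.2 i]⟩

theorem exists_isMaxOn_rank_lt [Fintype ι] (hι : Fintype.card ι < 3)
    {M : Matrix (Fin m) (Fin m) ℝ} (hM : M ∈ sdpFeasible X r)
    (hmax : IsMaxOn (ip C) (sdpFeasible X r) M) (hrank : 1 < M.rank) :
    ∃ M' ∈ sdpFeasible X r, IsMaxOn (ip C) (sdpFeasible X r) M' ∧ M'.rank < M.rank := by
  obtain ⟨W, Λ, hΛ, hW, hMW⟩ := hM.1.exists_eigenvectors_of_one_lt_rank hrank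
  obtain ⟨a, b, c, habc, hX⟩ := exists_ne_zero_forall_ip_conj_eq_zero hι X W
  set Y := !![a, c; c, b]
  have hconj (t : ℝ) : W * (t • Y) * Wᵀ = t • (W * Y * Wᵀ) := by
    rw [Matrix.mul_smul, Matrix.smul_mul]
  have hmem (t : ℝ) (ht : (diagonal Λ + t • Y).PosSemidef) :
      M + t • (W * Y * Wᵀ) ∈ sdpFeasible X r :=
    add_smul_mem_sdpFeasible hM hX (hconj t ▸ posSemidef_add_conj hM.1 hW hMW ht)
  have hobj (t : ℝ) : ip C (M + t • (W * Y * Wᵀ)) = ip C M + t * ip C (W * Y * Wᵀ) := by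
    rw [ip_add_right, ip_smul_right]
  have hCY : ip C (W * Y * Wᵀ) = 0 := by
    have hloc : IsLocalMax (fun t => ip C M + t * ip C (W * Y * Wᵀ)) 0 :=
      (eventually_posSemidef_diagonal_add_smul hΛ a b c).mono fun t ht => by
        simpa [hobj] using hmax (hmem t ht)
    simpa using hloc.hasDerivAt_eq_zero (((hasDerivAt_id 0).mul_const _).const_add _)
  obtain ⟨s, h₁, h₂, hdet⟩ := exists_det_eq_zero (hΛ 0) (hΛ 1) habc
  have hs : (diagonal Λ + s • Y).PosSemidef := by
    rw [diagonal_add_smul_fin_two]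
    exact posSemidef_fin_two h₁ h₂ hdet.ge
  refine ⟨M + s • (W * Y * Wᵀ), hmem s hs, fun N hN => ?_, ?_⟩
  · simpa [hobj, hCY] using hmax hN
  · rw [← hconj]
    refine rank_add_conj_lt hM.1.1 hW hMW (fun l => (hΛ l).ne') ?_
    rw [diagonal_add_smul_fin_two, det_fin_two_of, hdet]
    ring

theorem exists_isMaxOn_rank_le_one [Fintype ι] (hι : Fintype.card ι < 3)
    {M : Matrix (Fin m) (Fin m) ℝ} (hM : M ∈ sdpFeasible X r)
    (hmax : IsMaxOn (ip C) (sdpFeasible X r) M) :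
    ∃ M₀ ∈ sdpFeasible X r, IsMaxOn (ip C) (sdpFeasible X r) M₀ ∧ M₀.rank ≤ 1 := by
  induction hk : M.rank using Nat.strong_induction_on generalizing M with
  | _ k ih =>
    by_cases hrank : M.rank ≤ 1
    · exact ⟨M, hM, hmax, hrank⟩
    · obtain ⟨M', hM', hmax', hlt⟩ := exists_isMaxOn_rank_lt hι hM hmax (by omega)
      exact ih _ (hk ▸ hlt) hM' hmax' rfl

end RankReduction

section Existence

variable {m : ℕ} {A : Matrix (Fin (m + 1)) (Fin (m + 1)) ℝ} {p : Fin m → ℝ}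

lemma ip_sdpMat_last_eq {M : Matrix (Fin (m + 1)) (Fin (m + 1)) ℝ}
    (hM : M ∈ sdpFeasible (fun i => sdpMat A i.castSucc) (-p)) :
    ip (sdpMat A (Fin.last m)) M = ∑ i, p i - ((-(A + Aᵀ)) * M).trace := by
  have h := sum_ip_sdpMat A M
  rw [Fin.sum_univ_castSucc] at h
  simp only [hM.2, Pi.neg_apply, Finset.sum_neg_distrib, Matrix.neg_mul, trace_neg] at h ⊢
  linarith

lemma exists_diagonal_mem_sdpFeasible (hA : (-(A + Aᵀ)).PosDef) (hp : 0 ≤ p) :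
    ∃ d, diagonal d ∈ sdpFeasible (fun i => sdpMat A i.castSucc) (-p) := by
  have hdiag (k : Fin (m + 1)) : A k k < 0 := by
    have := hA.diag_pos (i := k)
    simp only [Matrix.neg_apply, Matrix.add_apply, transpose_apply] at this
    linarith
  refine ⟨Fin.snoc (fun i => p i / (-2 * A i.castSucc i.castSucc)) 0,
    PosSemidef.diagonal fun k => ?_, fun i => ?_⟩
  · refine Fin.lastCases (by simp) (fun i => ?_) k
    simpa using div_nonneg (hp i) (by linarith [hdiag i.castSucc])
  · rw [ip_sdpMat_diagonal, Fin.snoc_castSucc, Pi.neg_apply]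
    field_simp [(hdiag i.castSucc).ne]

theorem exists_isMaxOn_sdpMat (hA : (-(A + Aᵀ)).PosDef) (hp : 0 ≤ p) :
    ∃ M ∈ sdpFeasible (fun i => sdpMat A i.castSucc) (-p),
      IsMaxOn (ip (sdpMat A (Fin.last m))) (sdpFeasible (fun i => sdpMat A i.castSucc) (-p)) M := by
  set F := sdpFeasible (fun i => sdpMat A i.castSucc) (-p)
  obtain ⟨d, hd⟩ := exists_diagonal_mem_sdpFeasible hA hp
  obtain ⟨ε, hε, hS⟩ := hA.exists_pos_mul_trace_le
  have hF : IsClosed F := by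
    simp only [F, sdpFeasible, Set.ofPred_and, Set.ofPred_forall]
    exact isClosed_setOf_posSemidef.inter
      (isClosed_iInter fun i => isClosed_eq (continuous_ip _) continuous_const)
  -- feasible points outside a large enough box are worse than `diagonal d`
  refine (continuous_ip _).continuousOn.exists_isMaxOn' hF hd
    ((hasBasis_cocompact.inf_principal F).eventually_iff.2 ⟨_,
      isCompact_setOf_abs_apply_le ((∑ i, p i - ip (sdpMat A (Fin.last m)) (diagonal d)) / ε),
      fun M ⟨hbox, hM⟩ => ?_⟩)
  by_contra hlt
  refine hbox fun i j => (hM.1.abs_apply_le_trace i j).trans ?_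
  rw [le_div_iff₀ hε, mul_comm]
  linarith [hS M hM.1, ip_sdpMat_last_eq hM]

end Existence

/-- For a 3×3 matrix `A` with `A + Aᵀ` negative definite, the associated semidefinite
program (maximize `⟨A₃, M⟩` over `M ⪰ 0` with `⟨A₁, M⟩ = -p₁`, `⟨A₂, M⟩ = -p₂`) has an
optimal solution of rank at most 1. -/
theorem sdp_three_by_three_rank_one_optimal (A : Matrix (Fin 3) (Fin 3) ℝ)
    (hA : (-(A + Aᵀ)).PosDef) (p₁ p₂ : ℝ) (hp₁ : 0 ≤ p₁) (hp₂ : 0 ≤ p₂) :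
    ∃ M₀ : Matrix (Fin 3) (Fin 3) ℝ, M₀.PosSemidef ∧
      ip (sdpMat A 0) M₀ = -p₁ ∧ ip (sdpMat A 1) M₀ = -p₂ ∧
      M₀.rank ≤ 1 ∧
      ∀ M : Matrix (Fin 3) (Fin 3) ℝ, M.PosSemidef →
        ip (sdpMat A 0) M = -p₁ → ip (sdpMat A 1) M = -p₂ →
        ip (sdpMat A 2) M ≤ ip (sdpMat A 2) M₀ := by
  have hmem (N : Matrix (Fin 3) (Fin 3) ℝ) :
      N ∈ sdpFeasible (fun i : Fin 2 => sdpMat A i.castSucc) (-![p₁, p₂]) ↔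
        N.PosSemidef ∧ ip (sdpMat A 0) N = -p₁ ∧ ip (sdpMat A 1) N = -p₂ := by
    simp [sdpFeasible, Fin.forall_fin_two]
  obtain ⟨M, hM, hmax⟩ := exists_isMaxOn_sdpMat hA (p := ![p₁, p₂])
    (by simp [Pi.le_def, Fin.forall_fin_two, hp₁, hp₂])
  obtain ⟨M₀, hM₀, hmax₀, hrank⟩ := exists_isMaxOn_rank_le_one (by simp) hM hmax
  obtain ⟨hpsd, h₁, h₂⟩ := (hmem M₀).1 hM₀
  exact ⟨M₀, hpsd, h₁, h₂, hrank, fun N hN hN₁ hN₂ => hmax₀ ((hmem N).2 ⟨hN, hN₁, hN₂⟩)⟩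
end
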